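/- arXiv:1606.03442 — 7 statements merged into one kernel-verified Lean document; each statement's English description precedes it below -/
import Mathlib

section
/- The symplectic graph Sp(2ν,2) is a strongly regular graph with parameters (2^{2ν}−1, 2^{2ν−1}, 2^{2ν−2}, 2^{2ν−2}). -/
open Finset

abbrev F2 := ZMod 2

/-- Vectors in `F_2^{2ν}`, divided into `ν` blocks of length 2. -/
abbrev Vec (ν : ℕ) := Fin ν → Fin 2 → F2

/-- The symplectic form `x^T K y` with `K = I_ν ⊗ R`, `R = [[0,1],[1,0]]`. -/
def sform {ν : ℕ} (x y : Vec ν) : F2 := ∑ l, (x l 0 * y l 1 + x l 1 * y l 0)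

/-- The vertex set of the symplectic graph: nonzero vectors. -/
abbrev Vtx (ν : ℕ) := {x : Vec ν // x ≠ 0}

/-- The symplectic graph `Sp(2ν,2)`. -/
def Sp (ν : ℕ) : SimpleGraph (Vtx ν) where
  Adj x y := sform x.1 y.1 = 1
  symm := by
    constructor
    intro x y h
    have hs : sform y.1 x.1 = sform x.1 y.1 := by
      unfold sform
      congr 1
      funext l
      ring
    rw [hs]
    exact h
  loopless := by
    constructor
    intro x h
    have h0 : sform x.1 x.1 = 0 := by
      unfold sform
      apply Finset.sum_eq_zero
      intro l _
      rw [mul_comm (x.1 l 1)]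
      exact CharTwo.add_self_eq_zero _
    rw [h0] at h
    exact one_ne_zero h.symm

instance {ν : ℕ} : DecidableRel (Sp ν).Adj :=
  fun x y => inferInstanceAs (Decidable (sform x.1 y.1 = 1))

/-
The form `sform` is nondegenerate: pairing `x` with the basis vector at position `(l, j.rev)` reads off
the coordinate `x l j`. Hence for `x ≠ 0` the functional `sform x` maps onto `F₂`, and for distinct
nonzero `x, y` (linearly independent over `F₂`, since `x + y ≠ 0`) the pair `(sform x, sform y)` maps
onto `F₂²`. All fibres of a surjective additive map have the same size, so `x` has `2^{2ν}/2`
neighbours and any two distinct vertices have `2^{2ν}/4` common neighbours, adjacent or not.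
-/

lemma AddMonoidHom.card_fiber_mul_card_of_surjective {G M F : Type*} [AddGroup G] [Fintype G]
    [AddMonoid M] [Fintype M] [DecidableEq M] [FunLike F G M] [AddMonoidHomClass F G M]
    (f : F) (hf : Function.Surjective f) (c : M) :
    #{g | f g = c} * Fintype.card M = Fintype.card G := by
  have hfiber (d : M) : #{g | f g = d} = #{g | f g = c} :=
    card_fiber_eq_of_mem_range f (hf d) (hf c)
  calc #{g | f g = c} * Fintype.card M
      = ∑ d : M, #{g | f g = d} := by simp [hfiber, mul_comm]
    _ = Fintype.card G := (card_eq_sum_card_fiberwise fun g _ => mem_univ (f g)).symm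

section Form

variable {ν : ℕ}

lemma sform_add_left (x y z : Vec ν) : sform (x + y) z = sform x z + sform y z := by
  simp only [sform, Pi.add_apply, ← sum_add_distrib]
  exact sum_congr rfl fun _ _ => by ring

lemma sform_add_right (x y z : Vec ν) : sform x (y + z) = sform x y + sform x z := by
  simp only [sform, Pi.add_apply, ← sum_add_distrib]
  exact sum_congr rfl fun _ _ => by ring

lemma sform_smul_left (c : F2) (x y : Vec ν) : sform (c • x) y = c * sform x y := by
  simp only [sform, Pi.smul_apply, smul_eq_mul, mul_sum]
  exact sum_congr rfl fun _ _ => by ring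

lemma sform_smul_right (c : F2) (x y : Vec ν) : sform x (c • y) = c * sform x y := by
  simp only [sform, Pi.smul_apply, smul_eq_mul, mul_sum]
  exact sum_congr rfl fun _ _ => by ring

variable (ν) in
def sformBilin : LinearMap.BilinForm F2 (Vec ν) :=
  LinearMap.mk₂ F2 sform sform_add_left sform_smul_left sform_add_right sform_smul_right

@[simp]
lemma sformBilin_apply (x y : Vec ν) : sformBilin ν x y = sform x y := rfl

lemma sform_single (x : Vec ν) (l : Fin ν) (j : Fin 2) :
    sform x (Pi.single l (Pi.single j 1)) = x l j.rev := by
  rw [sform, sum_eq_single l (fun k _ hk => by simp [hk]) (by simp)]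
  fin_cases j <;> simp

lemma exists_sform_eq_one {x : Vec ν} (hx : x ≠ 0) : ∃ w, sform x w = 1 := by
  obtain ⟨l, j, hlj⟩ : ∃ l j, x l j ≠ 0 := by
    by_contra! h
    exact hx (funext fun l => funext (h l))
  refine ⟨Pi.single l (Pi.single j.rev 1), ?_⟩
  rw [sform_single, Fin.rev_rev]
  exact Fin.eq_one_of_ne_zero _ hlj

lemma Vec.pos_of_ne_zero {x : Vec ν} (hx : x ≠ 0) : 0 < ν := by
  by_contra! h
  obtain rfl : ν = 0 := by omega
  exact hx (Subsingleton.elim x 0)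

lemma sformBilin_surjective {x : Vec ν} (hx : x ≠ 0) : Function.Surjective (sformBilin ν x) := by
  obtain ⟨w, hw⟩ := exists_sform_eq_one hx
  exact fun c => ⟨c • w, by simp [hw]⟩

lemma F2_prod_span_of_coords : ∀ a b c d : F2 × F2, a.1 = 1 → b.2 = 1 → c.1 + c.2 = 1 →
    ∃ i j k : F2, i • a + j • b + k • c = d := by
  decide

lemma sformBilin_prod_surjective {x y : Vec ν} (hx : x ≠ 0) (hy : y ≠ 0) (hxy : x ≠ y) :
    Function.Surjective ((sformBilin ν x).prod (sformBilin ν y)) := by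
  have hxy' : x + y ≠ 0 := by rwa [← ZModModule.sub_eq_add, sub_ne_zero]
  obtain ⟨r, hr⟩ := exists_sform_eq_one hx
  obtain ⟨s, hs⟩ := exists_sform_eq_one hy
  obtain ⟨t, ht⟩ := exists_sform_eq_one hxy'
  rw [sform_add_left] at ht
  intro d
  obtain ⟨i, j, k, hd⟩ := F2_prod_span_of_coords (sform x r, sform y r) (sform x s, sform y s)
    (sform x t, sform y t) d hr hs ht
  exact ⟨i • r + j • s + k • t, by simpa [sform_add_right, sform_smul_right] using hd⟩

end Form

section Counting

variable {ν : ℕ}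

lemma card_vec (ν : ℕ) : Fintype.card (Vec ν) = 2 ^ (2 * ν) := by
  simp [ZMod.card, pow_mul]

lemma card_filter_sform_eq_one {x : Vec ν} (hx : x ≠ 0) :
    #{z | sform x z = 1} = 2 ^ (2 * ν - 1) := by
  have hfiber := AddMonoidHom.card_fiber_mul_card_of_surjective _ (sformBilin_surjective hx) 1
  have hpow : 2 ^ (2 * ν) = 2 ^ (2 * ν - 1) * 2 := by
    rw [← pow_succ, Nat.sub_add_cancel (by linarith [Vec.pos_of_ne_zero hx])]
  rw [card_vec, ZMod.card, hpow] at hfiber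
  exact Nat.eq_of_mul_eq_mul_right two_pos hfiber

lemma card_filter_sform_eq_one_and_sform_eq_one {x y : Vec ν} (hx : x ≠ 0) (hy : y ≠ 0)
    (hxy : x ≠ y) : #{z | sform x z = 1 ∧ sform y z = 1} = 2 ^ (2 * ν - 2) := by
  have hfiber := AddMonoidHom.card_fiber_mul_card_of_surjective _
    (sformBilin_prod_surjective hx hy hxy) (1, 1)
  have hpow : 2 ^ (2 * ν) = 2 ^ (2 * ν - 2) * (2 * 2) := by
    rw [← pow_two, ← pow_add, Nat.sub_add_cancel (by linarith [Vec.pos_of_ne_zero hx])]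
  simp only [LinearMap.coe_prod, Function.prod, sformBilin_apply, Prod.mk.injEq] at hfiber
  rw [card_vec, Fintype.card_prod, ZMod.card, hpow] at hfiber
  exact Nat.eq_of_mul_eq_mul_right (by norm_num) hfiber

end Counting

section Graph

variable {ν : ℕ}

lemma card_vtx (ν : ℕ) : Fintype.card (Vtx ν) = 2 ^ (2 * ν) - 1 := by
  rw [Fintype.card_subtype_compl, Fintype.card_subtype_eq, card_vec]

lemma card_vtx_subtype (p : Vec ν → Prop) [DecidablePred p] (hp : ∀ z, p z → z ≠ 0) :
    Fintype.card {y : Vtx ν // p y.1} = #{z | p z} :=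
  (Fintype.card_congr (Equiv.subtypeSubtypeEquivSubtype (hp _))).trans (Fintype.card_subtype p)

lemma Sp_degree (v : Vtx ν) : (Sp ν).degree v = 2 ^ (2 * ν - 1) := by
  rw [← SimpleGraph.card_neighborSet_eq_degree]
  refine (card_vtx_subtype (fun z => sform v.1 z = 1) fun z hz h0 => ?_).trans
    (card_filter_sform_eq_one v.2)
  simp [h0, sform] at hz

lemma Sp_card_commonNeighbors {v w : Vtx ν} (hvw : v ≠ w) :
    Fintype.card ((Sp ν).commonNeighbors v w) = 2 ^ (2 * ν - 2) := by
  refine (card_vtx_subtype (fun z => sform v.1 z = 1 ∧ sform w.1 z = 1) fun z hz h0 => ?_).trans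
    (card_filter_sform_eq_one_and_sform_eq_one v.2 w.2 (Subtype.coe_ne_coe.mpr hvw))
  simp [h0, sform] at hz

end Graph

theorem sp_isSRG_general (ν : ℕ) :
    (Sp ν).IsSRGWith (2 ^ (2 * ν) - 1) (2 ^ (2 * ν - 1)) (2 ^ (2 * ν - 2)) (2 ^ (2 * ν - 2)) :=
  { card := card_vtx ν
    regular := Sp_degree
    of_adj := fun _ _ hadj => Sp_card_commonNeighbors hadj.ne
    of_not_adj := fun _ _ hvw _ => Sp_card_commonNeighbors hvw }

/-- `Sp(2ν,2)` is strongly regular with parameters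
`(2^{2ν}-1, 2^{2ν-1}, 2^{2ν-2}, 2^{2ν-2})`. -/
theorem sp_isSRG (ν : ℕ) (hν : 1 ≤ ν) :
    (Sp ν).IsSRGWith (2 ^ (2 * ν) - 1) (2 ^ (2 * ν - 1)) (2 ^ (2 * ν - 2)) (2 ^ (2 * ν - 2)) :=
  sp_isSRG_general ν
end

section
/- Let A_1,…,A_ν be 2×2 matrices over F_2 and B the 2ν×2 matrix obtained by stacking them. Suppose the two columns b_1, b_2 of B are distinct and both have weight 1. If A_1^T R A_1 + ⋯ + A_ν^T R A_ν = R, then there is a unique index i with A_i ∈ {I_2, R} and A_j = 0 for all j ≠ i. -/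
open Finset Matrix

def R2 : Matrix (Fin 2) (Fin 2) F2 := !![0, 1; 1, 0]

/-! Over `F_2` the form `R` is alternating, so `Aᵀ R A = det A • R` and the hypothesis says
`∑ det A_i = 1`. The weight conditions make the columns of `B` two distinct unit vectors
`e_{(i₀, r₀)}`, `e_{(i₁, r₁)}`. If `i₀ ≠ i₁` every block has a zero column, so all determinants
vanish, which is impossible. Hence `i₀ = i₁`, all other blocks vanish, and the columns of `A_{i₀}`
are `e_{r₀} ≠ e_{r₁}`, i.e. `A_{i₀}` is `I₂` or `R`. -/

theorem transpose_mul_R2_mul (A : Matrix (Fin 2) (Fin 2) F2) : Aᵀ * R2 * A = A.det • R2 := by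
  have key : ∀ a b c d : F2,
      (c * a + a * c = 0 ∧ c * b + a * d = a * d - b * c) ∧
        d * a + b * c = a * d - b * c ∧ d * b + b * d = 0 := by decide
  ext i j
  fin_cases i <;> fin_cases j <;>
    simp [R2, det_fin_two, mul_apply, Fin.sum_univ_two, key (A 0 0) (A 0 1) (A 1 0) (A 1 1)]

theorem exists_eq_pi_single_of_card_filter_ne_zero_eq_one {ι : Type*} [Fintype ι] [DecidableEq ι]
    (v : ι → F2) (h : #{q | v q ≠ 0} = 1) : ∃ p, v = Pi.single p 1 := by
  obtain ⟨p, hp⟩ := card_eq_one.mp h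
  refine ⟨p, funext fun q => ?_⟩
  have hq : v q ≠ 0 ↔ q = p := by simpa using Finset.ext_iff.mp hp q
  by_cases hqp : q = p
  · subst hqp
    have hv := hq.mpr rfl
    simp only [Pi.single_eq_same]
    generalize v q = x at hv
    revert x
    decide
  · simpa [hqp] using hq

section UnitColumns

variable {ι α : Type*} [DecidableEq ι] {A : ι → Matrix (Fin 2) (Fin 2) α} {p : Fin 2 → ι × Fin 2}

theorem block_eq_zero_of_ne [Zero α] [One α]
    (hA : ∀ j s c, A j s c = if (j, s) = p c then 1 else 0) {j : ι}
    (h0 : j ≠ (p 0).1) (h1 : j ≠ (p 1).1) : A j = 0 := by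
  ext s c
  fin_cases c
  · simp [hA, Prod.ext_iff, h0]
  · simp [hA, Prod.ext_iff, h1]

theorem det_block_eq_zero_of_fst_ne [CommRing α]
    (hA : ∀ j s c, A j s c = if (j, s) = p c then 1 else 0) (hp : (p 0).1 ≠ (p 1).1) (j : ι) :
    (A j).det = 0 := by
  by_cases hj : j = (p 0).1
  · refine det_eq_zero_of_column_eq_zero 1 fun s => ?_
    simp [hA, Prod.ext_iff, hj, hp]
  · exact det_eq_zero_of_column_eq_zero 0 fun s => by simp [hA, Prod.ext_iff, hj]

theorem block_eq_one_or_R2 {A : ι → Matrix (Fin 2) (Fin 2) F2}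
    (hA : ∀ j s c, A j s c = if (j, s) = p c then 1 else 0)
    (hfst : (p 0).1 = (p 1).1) (hp : p 0 ≠ p 1) : A (p 0).1 = 1 ∨ A (p 0).1 = R2 := by
  obtain ⟨⟨i, r₀⟩, hp0⟩ : ∃ q, p 0 = q := ⟨_, rfl⟩
  obtain ⟨⟨i', r₁⟩, hp1⟩ : ∃ q, p 1 = q := ⟨_, rfl⟩
  simp only [hp0, hp1] at hfst hp ⊢
  subst hfst
  have hr : r₀ ≠ r₁ := by simpa using hp
  fin_cases r₀ <;> fin_cases r₁
  · exact absurd rfl hr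
  · left
    ext s c
    fin_cases s <;> fin_cases c <;> simp [hA, hp0, hp1, one_apply]
  · right
    ext s c
    fin_cases s <;> fin_cases c <;> simp [hA, hp0, hp1, R2]
  · exact absurd rfl hr

end UnitColumns

/-- If the `2×2` blocks `A_1, …, A_ν` stack to a `2ν×2` matrix `B` whose two columns are
distinct and both of weight `1`, and `∑ A_iᵀ R A_i = R`, then exactly one `A_i` is `I₂` or `R`
and all the others vanish. -/
theorem unique_nonzero_block (ν : ℕ) (A : Fin ν → Matrix (Fin 2) (Fin 2) F2)
    (B : Matrix (Fin ν × Fin 2) (Fin 2) F2)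
    (hB : ∀ i r c, B (i, r) c = A i r c)
    (hne : (fun p => B p 0) ≠ (fun p => B p 1))
    (hw0 : (univ.filter (fun p : Fin ν × Fin 2 => B p 0 ≠ 0)).card = 1)
    (hw1 : (univ.filter (fun p : Fin ν × Fin 2 => B p 1 ≠ 0)).card = 1)
    (hsum : ∑ i, (A i)ᵀ * R2 * A i = R2) :
    ∃! i : Fin ν, (A i = 1 ∨ A i = R2) ∧ ∀ j, j ≠ i → A j = 0 := by
  have hw : ∀ c : Fin 2, #{q | B q c ≠ 0} = 1 := Fin.forall_fin_two.mpr ⟨hw0, hw1⟩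
  choose p hp using fun c => exists_eq_pi_single_of_card_filter_ne_zero_eq_one _ (hw c)
  have hp01 : p 0 ≠ p 1 := fun h => hne (by rw [hp 0, hp 1, h])
  have hA : ∀ j s c, A j s c = if (j, s) = p c then 1 else 0 := fun j s c => by
    rw [← hB, ← Pi.single_apply, ← hp c]
  have hdet : ∑ i, (A i).det = 1 := by
    simp only [transpose_mul_R2_mul, ← sum_smul] at hsum
    simpa [R2] using congrFun₂ hsum 0 1
  have hfst : (p 0).1 = (p 1).1 := by
    by_contra h
    simp [det_block_eq_zero_of_fst_ne hA h] at hdet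
  have hblock := block_eq_one_or_R2 hA hfst hp01
  have hzero : ∀ j, j ≠ (p 0).1 → A j = 0 := fun j hj =>
    block_eq_zero_of_ne hA hj (hfst ▸ hj)
  refine ⟨(p 0).1, ⟨hblock, hzero⟩, fun i ⟨_, hi⟩ => by_contra fun hne' => ?_⟩
  rw [hi _ (Ne.symm hne')] at hblock
  revert hblock
  decide
end

section
/- The subgroup of automorphisms of Sp(2ν,2) fixing the set of standard basis vectors setwise is isomorphic to the group of 2ν×2ν matrices of the form P(A_1,…,A_ν), where P is a ν×ν permutation matrix and each A_i ∈ {I_2, R}; here P(A_1,…,A_ν) is obtained from P by replacing the (i,j) entry 1 by A_i and each 0 by the 2×2 zero block. -/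
open Finset Matrix

/-- A permutation of the vertices is an automorphism of `Sp(2ν,2)` iff it
preserves the adjacency relation `x^T K y = 1`. -/
def IsAut {ν : ℕ} (σ : Equiv.Perm (Vtx ν)) : Prop :=
  ∀ x y : Vtx ν, sform (σ x).1 (σ y).1 = 1 ↔ sform x.1 y.1 = 1

/-- The standard basis vector `e_{(i,r)}`, in block form. -/
def stdB {ν : ℕ} (p : Fin ν × Fin 2) : Vec ν :=
  fun l c => if l = p.1 ∧ c = p.2 then 1 else 0

/-- The set of standard basis vectors, as vertices. -/
def EVtx (ν : ℕ) : Set (Vtx ν) := {x | ∃ p, x.1 = stdB p}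

/-- `M` is of the form `P(A_1,…,A_ν)`: a ν×ν permutation matrix `P` (given by a
permutation `p`, with `P i j = 1` iff `i = p j`) whose entry `1` in row `i` is replaced by
the block `A_i ∈ {I₂, R}` and whose entries `0` are replaced by the `2×2` zero block. -/
def IsBlockPerm {ν : ℕ} (M : Matrix (Fin ν × Fin 2) (Fin ν × Fin 2) F2) : Prop :=
  ∃ (p : Equiv.Perm (Fin ν)) (A : Fin ν → Matrix (Fin 2) (Fin 2) F2),
    (∀ i, A i = 1 ∨ A i = R2) ∧
    ∀ i j r c, M (i, r) (j, c) = if i = p j then A i r c else 0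

/-! An automorphism `σ` fixing `E` setwise permutes the indices `(i, r)` of the basis vectors.
The only neighbour of `e_(i,r)` inside `E` is its partner `e_(i,r+1)`, so this index permutation
`π` commutes with the partner involution; such permutations are exactly the shears
`(j, d) ↦ (p j, d + g j)`. Since the coordinate `x_(i,r)` of any vertex is its form with
`e_(i,r+1)`, an automorphism is determined by its values on `E`; hence `σ` is the relabelling
of coordinates by `π`, and its matrix is the permutation matrix of `π`, which is the block
matrix `P(A_1,…,A_ν)` with `A_i = I` or `R` according to `g`. -/

open Equiv Fin.CommRing

section Partner

variable {ι : Type*}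

def partner : Perm (ι × Fin 2) := prodCongr (Equiv.refl ι) (Equiv.addRight 1)

@[simp] lemma partner_apply (q : ι × Fin 2) : partner q = (q.1, q.2 + 1) := rfl

lemma partner_partner (q : ι × Fin 2) : partner (partner q) = q := by
  simp [CharTwo.add_cancel_right]

lemma partner_eq_iff {p q : ι × Fin 2} : partner p = q ↔ p = partner q := by
  rw [← (partner.injective).eq_iff, partner_partner]

def shear (p : Perm ι) (g : ι → Fin 2) : Perm (ι × Fin 2) :=
  prodShear p fun j => Equiv.addRight (g j)

@[simp] lemma shear_apply (p : Perm ι) (g : ι → Fin 2) (q : ι × Fin 2) :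
    shear p g q = (p q.1, q.2 + g q.1) := rfl

lemma commute_partner_iff {π : Perm (ι × Fin 2)} :
    Commute π partner ↔ ∃ p g, π = shear p g := by
  refine ⟨fun h => ?_, ?_⟩
  · have hπ : ∀ j d, π (j, d) = ((π (j, 0)).1, d + (π (j, 0)).2) := by
      intro j d
      fin_cases d
      · simp
      · simpa [add_comm] using (Perm.ext_iff.1 h (j, 0))
    have hinj : Function.Injective fun j => (π (j, 0)).1 := by
      intro j j' hjj'
      dsimp only at hjj'
      have : π (j', 0) = π (j, (π (j', 0)).2 + (π (j, 0)).2) := by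
        rw [hπ j, hjj', CharTwo.add_cancel_right]
      exact (Prod.ext_iff.1 (π.injective this)).1.symm
    have hsurj : Function.Surjective fun j => (π (j, 0)).1 := fun i => by
      have := hπ (π.symm (i, 0)).1 (π.symm (i, 0)).2
      simp only [Prod.mk.eta, apply_symm_apply] at this
      exact ⟨_, (congrArg Prod.fst this).symm⟩
    exact ⟨ofBijective _ ⟨hinj, hsurj⟩, fun j => (π (j, 0)).2, Perm.ext fun q => hπ q.1 q.2⟩
  · rintro ⟨p, g, rfl⟩
    exact Perm.ext fun q => by simp [add_right_comm]

end Partner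

section

variable {ν : ℕ}

lemma sform_eq_sum (x y : Vec ν) :
    sform x y = ∑ q : Fin ν × Fin 2, x q.1 q.2 * y (partner q).1 (partner q).2 := by
  simp [sform, Fintype.sum_prod_type, Fin.sum_univ_two]

lemma stdB_apply (p : Fin ν × Fin 2) (l : Fin ν) (c : Fin 2) :
    stdB p l c = if (l, c) = p then 1 else 0 := by
  simp [stdB, Prod.ext_iff]

lemma stdB_apply_eq_one_iff (p : Fin ν × Fin 2) (l : Fin ν) (c : Fin 2) :
    stdB p l c = 1 ↔ (l, c) = p := by
  simp [stdB_apply]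

lemma stdB_ne_zero (p : Fin ν × Fin 2) : stdB p ≠ 0 := fun h => by
  simpa [h] using (stdB_apply_eq_one_iff p p.1 p.2).2 rfl

lemma stdB_injective : Function.Injective (stdB (ν := ν)) := fun p q h => by
  simpa [h, stdB_apply_eq_one_iff] using (stdB_apply_eq_one_iff p p.1 p.2).2 rfl

lemma sform_stdB_right (x : Vec ν) (q : Fin ν × Fin 2) :
    sform x (stdB q) = x (partner q).1 (partner q).2 := by
  simp only [sform_eq_sum, stdB_apply, Prod.mk.eta, partner_eq_iff, mul_ite, mul_one, mul_zero,
    Finset.sum_ite_eq', Finset.mem_univ, if_true]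

lemma sform_stdB_stdB_eq_one_iff (p q : Fin ν × Fin 2) :
    sform (stdB p) (stdB q) = 1 ↔ partner q = p := by
  rw [sform_stdB_right, stdB_apply_eq_one_iff]

def eV (q : Fin ν × Fin 2) : Vtx ν := ⟨stdB q, stdB_ne_zero q⟩

@[simp] lemma eV_val (q : Fin ν × Fin 2) : (eV q).1 = stdB q := rfl

lemma eV_injective : Function.Injective (eV (ν := ν)) := fun _ _ h =>
  stdB_injective (congrArg Subtype.val h)

lemma EVtx_eq_range : EVtx ν = Set.range eV := by
  ext x
  simp [EVtx, eV, Subtype.ext_iff, eq_comm]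

def relabel (π : Perm (Fin ν × Fin 2)) (x : Vec ν) : Vec ν :=
  fun l c => x (π.symm (l, c)).1 (π.symm (l, c)).2

lemma relabel_stdB (π : Perm (Fin ν × Fin 2)) (q : Fin ν × Fin 2) :
    relabel π (stdB q) = stdB (π q) := by
  funext l c
  simp [relabel, stdB_apply, symm_apply_eq]

lemma relabel_ne_zero (π : Perm (Fin ν × Fin 2)) {x : Vec ν} (hx : x ≠ 0) :
    relabel π x ≠ 0 := by
  contrapose! hx
  funext l c
  simpa [relabel] using congrFun₂ hx (π (l, c)).1 (π (l, c)).2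

lemma sform_relabel {π : Perm (Fin ν × Fin 2)} (h : Commute π partner) (x y : Vec ν) :
    sform (relabel π x) (relabel π y) = sform x y := by
  have h' : ∀ q, π.symm (partner q) = partner (π.symm q) := fun q =>
    Perm.ext_iff.1 h.inv_left q
  simp only [sform_eq_sum, relabel, Prod.mk.eta, h']
  exact Equiv.sum_comp π.symm (fun q => x q.1 q.2 * y (partner q).1 (partner q).2)

def relabelVtx : Perm (Fin ν × Fin 2) →* Perm (Vtx ν) where
  toFun π :=
    { toFun x := ⟨relabel π x, relabel_ne_zero π x.2⟩
      invFun x := ⟨relabel π⁻¹ x, relabel_ne_zero π⁻¹ x.2⟩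
      left_inv x := Subtype.ext (congrArg (relabel · x.1) (inv_mul_cancel π))
      right_inv x := Subtype.ext (congrArg (relabel · x.1) (mul_inv_cancel π)) }
  map_one' := rfl
  map_mul' _ _ := rfl

lemma relabelVtx_eV (π : Perm (Fin ν × Fin 2)) (q : Fin ν × Fin 2) :
    relabelVtx π (eV q) = eV (π q) :=
  Subtype.ext (relabel_stdB π q)

def AutE (ν : ℕ) : Set (Perm (Vtx ν)) := {σ | IsAut σ ∧ ⇑σ '' EVtx ν = EVtx ν}

lemma relabelVtx_mem_autE {π : Perm (Fin ν × Fin 2)} (h : Commute π partner) :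
    relabelVtx π ∈ AutE ν := by
  refine ⟨fun x y => ?_, ?_⟩
  · exact iff_of_eq (congrArg (· = 1) (sform_relabel h x.1 y.1))
  · rw [EVtx_eq_range, ← Set.range_comp,
      show ⇑(relabelVtx π) ∘ eV = eV ∘ π from funext (relabelVtx_eV π), EquivLike.range_comp]

lemma permMatrixHom_prodShear_apply {ι κ R : Type*} [Fintype ι] [DecidableEq ι] [Fintype κ]
    [DecidableEq κ] [NonAssocSemiring R] (p : Perm ι) (e : ι → Perm κ) (i j : ι) (r c : κ) :
    permMatrixHom (R := R) (prodShear p e) (i, r) (j, c) =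
      if i = p j then permMatrixHom (R := R) (e j) r c else 0 := by
  by_cases h : i = p j
  · subst h
    simp [eq_comm]
  · simp [h, eq_symm_apply, eq_comm]

lemma eq_one_or_eq_R2_iff (A : Matrix (Fin 2) (Fin 2) F2) :
    A = 1 ∨ A = R2 ↔ ∃ a : Fin 2, A = permMatrixHom (Equiv.addRight a) := by
  have h0 : permMatrixHom (R := F2) (Equiv.addRight (0 : Fin 2)) = 1 := by
    ext r c; fin_cases r <;> fin_cases c <;> rfl
  have h1 : permMatrixHom (R := F2) (Equiv.addRight (1 : Fin 2)) = R2 := by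
    ext r c; fin_cases r <;> fin_cases c <;> rfl
  rw [Fin.exists_fin_two, h0, h1]

lemma isBlockPerm_iff {M : Matrix (Fin ν × Fin 2) (Fin ν × Fin 2) F2} :
    IsBlockPerm M ↔ ∃ π, Commute π partner ∧ M = permMatrixHom π := by
  simp_rw [commute_partner_iff]
  constructor
  · rintro ⟨p, A, hA, hM⟩
    choose a ha using fun i => (eq_one_or_eq_R2_iff (A i)).1 (hA i)
    refine ⟨shear p (a ∘ p), ⟨p, _, rfl⟩, ?_⟩
    ext ⟨i, r⟩ ⟨j, c⟩
    rw [hM, shear, permMatrixHom_prodShear_apply]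
    split_ifs with h
    · rw [ha, h]
      rfl
    · rfl
  · rintro ⟨_, ⟨p, g, rfl⟩, rfl⟩
    refine ⟨p, fun i => permMatrixHom (Equiv.addRight (g (p.symm i))),
      fun i => (eq_one_or_eq_R2_iff _).2 ⟨_, rfl⟩, fun i j r c => ?_⟩
    rw [shear, permMatrixHom_prodShear_apply]
    split_ifs with h
    · simp [h]
    · rfl

def matrixOf (σ : Perm (Vtx ν)) : Matrix (Fin ν × Fin 2) (Fin ν × Fin 2) F2 :=
  fun a q => (σ (eV q)).1 a.1 a.2

lemma matrixOf_relabelVtx (π : Perm (Fin ν × Fin 2)) :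
    matrixOf (relabelVtx π) = permMatrixHom π := by
  ext a q
  simp [matrixOf, relabelVtx_eV, stdB_apply, symm_apply_eq]

lemma zmod_two_eq_of_iff : ∀ a b : F2, (a = 1 ↔ b = 1) → a = b := by decide

section Automorphism

variable {σ τ : Perm (Vtx ν)}

lemma IsAut.sform_apply (hσ : IsAut σ) (x y : Vtx ν) :
    sform (σ x).1 (σ y).1 = sform x.1 y.1 :=
  zmod_two_eq_of_iff _ _ (hσ x y)

lemma eq_of_forall_eV (hσ : IsAut σ) (hσE : EVtx ν ⊆ ⇑σ '' EVtx ν) (hτ : IsAut τ)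
    (h : ∀ q, σ (eV q) = τ (eV q)) : σ = τ := by
  ext x l c
  obtain ⟨_, ⟨q, rfl⟩, hq⟩ := (EVtx_eq_range ▸ hσE) ⟨(l, c + 1), rfl⟩
  have hcoord : ∀ z : Vtx ν, z.1 l c = sform z.1 (eV (l, c + 1)).1 := fun z => by
    simp [sform_stdB_right, CharTwo.add_cancel_right]
  calc (σ x).1 l c = sform (σ x).1 (σ (eV q)).1 := by rw [hq, hcoord]
    _ = sform (τ x).1 (τ (eV q)).1 := by rw [hσ.sform_apply, hτ.sform_apply]
    _ = (τ x).1 l c := by rw [← h, hq, hcoord]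

lemma exists_commute_partner_eq_relabelVtx (hσ : σ ∈ AutE ν) :
    ∃ π, Commute π partner ∧ σ = relabelVtx π := by
  obtain ⟨hσ, hE⟩ := hσ
  have hmaps : ∀ q, ∃ q', σ (eV q) = eV q' := fun q => by
    have : σ (eV q) ∈ Set.range eV := EVtx_eq_range ▸ hE ▸ Set.mem_image_of_mem σ ⟨q, rfl⟩
    obtain ⟨q', h⟩ := this
    exact ⟨q', h.symm⟩
  choose f hf using hmaps
  have hinj : Function.Injective f := fun p q h => eV_injective (σ.injective (by rw [hf, hf, h]))
  let π := ofBijective f (Finite.injective_iff_bijective.1 hinj)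
  have hcomm : Commute π partner := Perm.ext fun q => by
    have key :
        sform (stdB (f q)) (stdB (f (partner q))) = sform (stdB q) (stdB (partner q)) := by
      simpa only [hf, eV_val] using hσ.sform_apply (eV q) (eV (partner q))
    have hadj := (sform_stdB_stdB_eq_one_iff _ _).2 (partner_partner q)
    exact partner_eq_iff.1 ((sform_stdB_stdB_eq_one_iff _ _).1 (key ▸ hadj))
  refine ⟨π, hcomm, eq_of_forall_eV hσ hE.superset (relabelVtx_mem_autE hcomm).1 fun q => ?_⟩
  rw [hf, relabelVtx_eV]
  rfl

lemma isBlockPerm_matrixOf (hσ : σ ∈ AutE ν) : IsBlockPerm (matrixOf σ) := by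
  obtain ⟨π, hπ, rfl⟩ := exists_commute_partner_eq_relabelVtx hσ
  exact isBlockPerm_iff.2 ⟨π, hπ, matrixOf_relabelVtx π⟩

lemma exists_mem_autE_matrixOf_eq {M : Matrix (Fin ν × Fin 2) (Fin ν × Fin 2) F2}
    (hM : IsBlockPerm M) : ∃ σ ∈ AutE ν, matrixOf σ = M := by
  obtain ⟨π, hπ, rfl⟩ := isBlockPerm_iff.1 hM
  exact ⟨relabelVtx π, relabelVtx_mem_autE hπ, matrixOf_relabelVtx π⟩

lemma eq_of_matrixOf_eq (hσ : σ ∈ AutE ν) (hτ : IsAut τ) (h : matrixOf σ = matrixOf τ) :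
    σ = τ :=
  eq_of_forall_eV hσ.1 hσ.2.superset hτ fun q =>
    Subtype.ext (funext₂ fun l c => congrFun₂ h (l, c) q)

lemma matrixOf_mul (hσ : σ ∈ AutE ν) (hτ : τ ∈ AutE ν) :
    matrixOf (σ * τ) = matrixOf σ * matrixOf τ := by
  obtain ⟨π, -, rfl⟩ := exists_commute_partner_eq_relabelVtx hσ
  obtain ⟨π', -, rfl⟩ := exists_commute_partner_eq_relabelVtx hτ
  simp only [← map_mul, matrixOf_relabelVtx]

end Automorphism

end

theorem autE_iso_blockPerm_general (ν : ℕ) :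
    ∃ e : {σ : Equiv.Perm (Vtx ν) // IsAut σ ∧ ⇑σ '' EVtx ν = EVtx ν} ≃
          {M : Matrix (Fin ν × Fin 2) (Fin ν × Fin 2) F2 // IsBlockPerm M},
      ∀ (σ τ : Equiv.Perm (Vtx ν)) (hσ : IsAut σ ∧ ⇑σ '' EVtx ν = EVtx ν)
        (hτ : IsAut τ ∧ ⇑τ '' EVtx ν = EVtx ν)
        (hστ : IsAut (σ * τ) ∧ ⇑(σ * τ) '' EVtx ν = EVtx ν),
        (e ⟨σ * τ, hστ⟩).1 = (e ⟨σ, hσ⟩).1 * (e ⟨τ, hτ⟩).1 := by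
  refine ⟨Equiv.ofBijective (fun σ => ⟨matrixOf σ.1, isBlockPerm_matrixOf σ.2⟩) ⟨?_, ?_⟩,
    fun σ τ hσ hτ _ => matrixOf_mul hσ hτ⟩
  · rintro ⟨σ, hσ⟩ ⟨τ, hτ⟩ h
    exact Subtype.ext (eq_of_matrixOf_eq hσ hτ.1 (congrArg Subtype.val h))
  · rintro ⟨M, hM⟩
    obtain ⟨σ, hσ, rfl⟩ := exists_mem_autE_matrixOf_eq hM
    exact ⟨⟨σ, hσ⟩, rfl⟩

/-- The group `Aut_E` of automorphisms of `Sp(2ν,2)` fixing the set of standard basis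
vectors setwise is isomorphic to the group of matrices `P(A_1,…,A_ν)` with `P` a
permutation matrix and `A_i ∈ {I₂, R}`: there is a bijection which is multiplicative. -/
theorem autE_iso_blockPerm (ν : ℕ) (hν : 1 ≤ ν) :
    ∃ e : {σ : Equiv.Perm (Vtx ν) // IsAut σ ∧ ⇑σ '' EVtx ν = EVtx ν} ≃
          {M : Matrix (Fin ν × Fin 2) (Fin ν × Fin 2) F2 // IsBlockPerm M},
      ∀ (σ τ : Equiv.Perm (Vtx ν)) (hσ : IsAut σ ∧ ⇑σ '' EVtx ν = EVtx ν)
        (hτ : IsAut τ ∧ ⇑τ '' EVtx ν = EVtx ν)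
        (hστ : IsAut (σ * τ) ∧ ⇑(σ * τ) '' EVtx ν = EVtx ν),
        (e ⟨σ * τ, hστ⟩).1 = (e ⟨σ, hσ⟩).1 * (e ⟨τ, hτ⟩).1 :=
  autE_iso_blockPerm_general ν
end

section
/- For any A ∈ GL_{2ν}(F_2) with A^T K A = K that permutes the standard basis vectors, A equals P(A_1,…,A_ν) for some ν×ν permutation matrix P and blocks A_i ∈ {I_2, R}. -/
open Finset Matrix

/-- `K = I_ν ⊗ R` as a `2ν × 2ν` matrix (indices written as pairs). -/
def Kmat (ν : ℕ) : Matrix (Fin ν × Fin 2) (Fin ν × Fin 2) F2 :=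
  fun p q => if p.1 = q.1 then R2 p.2 q.2 else 0

/-- The standard basis vector `e_p` of `F_2^{2ν}`. -/
def stdb {ν : ℕ} (p : Fin ν × Fin 2) : Fin ν × Fin 2 → F2 :=
  fun q => if q = p then 1 else 0

/-
Since `A` is invertible, the map σ it induces on the standard basis is a bijection, so `A` is
the permutation matrix of σ, and `Aᵀ K A = K` says that σ preserves `K`. Two indices lie in the
same pair `{(j, 0), (j, 1)}` exactly when they are equal or `K`-adjacent, so σ maps pairs to
pairs: `σ (j, c) = (π j, ρ_j c)`. Each `ρ_j` permutes `Fin 2`, so its matrix is `I₂` or `R`.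
-/

open Equiv

lemma stdb_eq_single {ν : ℕ} (p : Fin ν × Fin 2) : stdb p = Pi.single p 1 := by
  ext q
  simp [stdb, Pi.single_apply]

section PermMatrix

variable {n R : Type*} [Fintype n] [DecidableEq n]

lemma Matrix.eq_permMatrix_inv_of_mulVec_single [NonAssocSemiring R] {A : Matrix n n R}
    (σ : Perm n) (h : ∀ y, A *ᵥ Pi.single y 1 = Pi.single (σ y) 1) :
    A = σ⁻¹.permMatrix R := by
  ext x y
  have := congrFun (h y) x
  simp only [mulVec_single_one, col_apply] at this
  simp [this, Pi.single_apply, Perm.inv_def, Equiv.symm_apply_eq]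

lemma Matrix.exists_eq_permMatrix_inv_of_isUnit [Semiring R] [Nontrivial R] {A : Matrix n n R}
    (hA : IsUnit A) (h : ∀ y, ∃ x, A *ᵥ Pi.single y 1 = Pi.single x 1) :
    ∃ σ : Perm n, A = σ⁻¹.permMatrix R := by
  choose σ hσ using h
  have hinj : Function.Injective σ := fun y y' hyy' => by
    have : (Pi.single y 1 : n → R) = Pi.single y' 1 :=
      mulVec_injective_of_isUnit hA (by rw [hσ, hσ, hyy'])
    simpa [Pi.single_apply] using congrFun this y
  exact ⟨.ofBijective σ hinj.bijective_of_finite, eq_permMatrix_inv_of_mulVec_single _ hσ⟩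

lemma Matrix.permMatrix_inv_transpose_mul_mul [NonAssocSemiring R] (σ : Perm n)
    (M : Matrix n n R) :
    (σ⁻¹.permMatrix R)ᵀ * M * σ⁻¹.permMatrix R = M.submatrix σ σ := by
  rw [transpose_permMatrix, inv_inv, PEquiv.toMatrix_toPEquiv_mul, PEquiv.mul_toMatrix_toPEquiv]
  rfl

end PermMatrix

lemma Equiv.Perm.exists_eq_prodShear {α β : Type*} [Nonempty β] (σ : Perm (α × β))
    (h : ∀ p q, (σ p).1 = (σ q).1 ↔ p.1 = q.1) :
    ∃ (π : Perm α) (ρ : α → Perm β), σ = π.prodShear ρ := by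
  obtain ⟨b₀⟩ := ‹Nonempty β›
  have hfst : ∀ a b, (σ (a, b)).1 = (σ (a, b₀)).1 := fun a b => (h _ _).2 rfl
  have hπ : Function.Bijective fun a => (σ (a, b₀)).1 := by
    refine ⟨fun a a' haa' => (h _ _).1 haa', fun a' => ?_⟩
    obtain ⟨⟨a, b⟩, hab⟩ := σ.surjective (a', b₀)
    exact ⟨a, by dsimp only; rw [← hfst a b, hab]⟩
  have hρ : ∀ a, Function.Bijective fun b => (σ (a, b)).2 := by
    refine fun a => ⟨fun b b' hbb' => ?_, fun b' => ?_⟩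
    · have := σ.injective (Prod.ext (by rw [hfst a b, hfst a b']) hbb')
      exact (Prod.mk.inj this).2
    · obtain ⟨⟨a'', b⟩, hab⟩ := σ.surjective ((σ (a, b₀)).1, b')
      have ha : a'' = a := (h (a'', b) (a, b₀)).1 (by rw [hab])
      exact ⟨b, by dsimp only; rw [← ha, hab]⟩
  refine ⟨.ofBijective _ hπ, fun a => .ofBijective _ (hρ a), ?_⟩
  ext ⟨a, b⟩
  · exact hfst a b
  · rfl

lemma fst_eq_iff_eq_or_Kmat_eq_one {ν : ℕ} (p q : Fin ν × Fin 2) :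
    p.1 = q.1 ↔ p = q ∨ Kmat ν p q = 1 := by
  obtain ⟨i, r⟩ := p
  obtain ⟨j, c⟩ := q
  by_cases hij : i = j
  · subst hij
    fin_cases r <;> fin_cases c <;> simp [Kmat, R2]
  · simp [Kmat, hij]

lemma fst_eq_iff_of_Kmat_submatrix {ν : ℕ} {σ : Perm (Fin ν × Fin 2)}
    (hσ : (Kmat ν).submatrix σ σ = Kmat ν) (p q : Fin ν × Fin 2) :
    (σ p).1 = (σ q).1 ↔ p.1 = q.1 := by
  rw [fst_eq_iff_eq_or_Kmat_eq_one, fst_eq_iff_eq_or_Kmat_eq_one, σ.injective.eq_iff,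
    ← submatrix_apply (Kmat ν) σ σ, hσ]

lemma permMatrix_fin_two (ρ : Perm (Fin 2)) : ρ.permMatrix F2 = 1 ∨ ρ.permMatrix F2 = R2 := by
  revert ρ
  decide

lemma isBlockPerm_permMatrix_prodShear {ν : ℕ} (π : Perm (Fin ν)) (ρ : Fin ν → Perm (Fin 2)) :
    IsBlockPerm (Perm.permMatrix F2 (π.prodShear ρ)⁻¹) := by
  refine ⟨π, fun i => (ρ (π.symm i))⁻¹.permMatrix F2, fun i => permMatrix_fin_two _, ?_⟩
  intro i j r c
  by_cases hij : i = π j <;> simp [hij, Perm.inv_def, Equiv.symm_apply_eq]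

/-- Any invertible matrix `A` with `Aᵀ K A = K` that permutes the standard basis vectors
is of the form `P(A_1,…,A_ν)` with blocks `A_i ∈ {I₂, R}`. -/
theorem symplectic_basis_perm_isBlockPerm (ν : ℕ)
    (A : Matrix (Fin ν × Fin 2) (Fin ν × Fin 2) F2)
    (hA : IsUnit A) (hK : Aᵀ * Kmat ν * A = Kmat ν)
    (hperm : ∀ p, ∃ q, A.mulVec (stdb p) = stdb q) :
    IsBlockPerm A := by
  obtain ⟨σ, rfl⟩ :=
    exists_eq_permMatrix_inv_of_isUnit hA (by simpa only [stdb_eq_single] using hperm)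
  rw [permMatrix_inv_transpose_mul_mul] at hK
  obtain ⟨π, ρ, rfl⟩ := σ.exists_eq_prodShear (fst_eq_iff_of_Kmat_submatrix hK)
  exact isBlockPerm_permMatrix_prodShear π ρ
end

section
/- For every vertex x ∈ O(0,ν,0) of Sp(2ν,2) and every orbit O(i,j,k): the number of neighbors of x in O(i,j,k) equals ½|O(i,j,k)| if j ≥ 1; equals |O(i,j,k)| if j = 0 and i is odd; and equals 0 if j = 0 and i is even. -/
open Finset

/-- The weight of a length-2 block. -/
def wt (b : Fin 2 → F2) : ℕ := (univ.filter (fun c => b c ≠ 0)).card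

/-- The number of blocks of `x` having weight `w`. -/
def nblk {ν : ℕ} (x : Vec ν) (w : ℕ) : ℕ := (univ.filter (fun l => wt (x l) = w)).card

/-- The orbit `O(i,j,k)` as a finset of vertices. -/
def OFin (ν i j k : ℕ) : Finset (Vtx ν) :=
  univ.filter (fun y => nblk y.1 2 = i ∧ nblk y.1 1 = j ∧ nblk y.1 0 = k)

/-!
Blocks of `x` all have weight one, so a block of `y` contributes `1` to `sform x y` exactly when
it has weight two, and swapping the two coordinates of a weight-one block of `y` changes
`sform x y` by `1`. If `y` has a weight-one block, swapping its first one is an involution of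
`O(i,j,k)` exchanging neighbours and non-neighbours of `x`. Otherwise `sform x y = i` in `F_2`.
-/

lemma two_mul_card_filter_of_involutive {α : Type*} (s : Finset α) (p : α → Prop)
    [DecidablePred p] (f : α → α) (hf : Function.Involutive f) (hs : ∀ a ∈ s, f a ∈ s)
    (hp : ∀ a ∈ s, p (f a) ↔ ¬ p a) :
    2 * (s.filter p).card = s.card := by
  have hswap : (s.filter p).card = (s.filter fun a => ¬ p a).card := by
    refine card_nbij' f f ?_ ?_ (fun a _ => hf a) (fun a _ => hf a)
    · intro a ha
      simp only [coe_filter, Set.mem_ofPred_eq] at ha ⊢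
      exact ⟨hs a ha.1, fun hfa => (hp a ha.1).1 hfa ha.2⟩
    · intro a ha
      simp only [coe_filter, Set.mem_ofPred_eq] at ha ⊢
      exact ⟨hs a ha.1, (hp a ha.1).2 ha.2⟩
  have := card_filter_add_card_filter_not (s := s) p
  omega

def blockForm (a b : Fin 2 → F2) : F2 := a 0 * b 1 + a 1 * b 0

lemma sform_eq_sum_blockForm {ν : ℕ} (x y : Vec ν) :
    sform x y = ∑ l, blockForm (x l) (y l) := rfl

def blockSwap (b : Fin 2 → F2) : Fin 2 → F2 := ![b 1, b 0]

lemma blockSwap_involutive : Function.Involutive blockSwap := by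
  intro b; funext c; fin_cases c <;> rfl

lemma wt_blockSwap (b : Fin 2 → F2) : wt (blockSwap b) = wt b := by
  revert b; decide

lemma blockForm_blockSwap {a b : Fin 2 → F2} (ha : wt a = 1) (hb : wt b = 1) :
    blockForm a (blockSwap b) = blockForm a b + 1 := by
  revert a b; decide

lemma blockForm_of_wt_ne_one {a b : Fin 2 → F2} (ha : wt a = 1) (hb : wt b ≠ 1) :
    blockForm a b = if wt b = 2 then 1 else 0 := by
  revert a b; decide

lemma sform_update_blockSwap {ν : ℕ} (x y : Vec ν) (l : Fin ν) (hx : wt (x l) = 1)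
    (hy : wt (y l) = 1) :
    sform x (Function.update y l (blockSwap (y l))) = sform x y + 1 := by
  simp only [sform_eq_sum_blockForm, ← sum_erase_add _ _ (mem_univ l), Function.update_self,
    blockForm_blockSwap hx hy]
  rw [sum_congr rfl fun m hm => by rw [Function.update_of_ne (ne_of_mem_erase hm)]]
  ring

lemma sform_eq_nblk_two {ν : ℕ} (x y : Vec ν) (hx : ∀ l, wt (x l) = 1) (hy : nblk y 1 = 0) :
    sform x y = nblk y 2 := by
  have hy' : ∀ l, wt (y l) ≠ 1 := by
    simpa [nblk, filter_eq_empty_iff] using hy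
  rw [sform_eq_sum_blockForm, sum_congr rfl fun l _ => blockForm_of_wt_ne_one (hx l) (hy' l),
    sum_boole, nblk]

def weightOneBlocks {ν : ℕ} (y : Vec ν) : Finset (Fin ν) := univ.filter fun l => wt (y l) = 1

def swapFirstWeightOne {ν : ℕ} (y : Vec ν) : Vec ν :=
  if h : (weightOneBlocks y).Nonempty then
    Function.update y ((weightOneBlocks y).min' h) (blockSwap (y ((weightOneBlocks y).min' h)))
  else y

section swapFirstWeightOne

variable {ν : ℕ}

lemma swapFirstWeightOne_of_nonempty (y : Vec ν) (h : (weightOneBlocks y).Nonempty) :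
    swapFirstWeightOne y =
      Function.update y ((weightOneBlocks y).min' h) (blockSwap (y ((weightOneBlocks y).min' h))) :=
  dif_pos h

lemma wt_swapFirstWeightOne (y : Vec ν) (l : Fin ν) :
    wt (swapFirstWeightOne y l) = wt (y l) := by
  unfold swapFirstWeightOne
  split_ifs with h
  · rcases eq_or_ne l ((weightOneBlocks y).min' h) with rfl | hl
    · rw [Function.update_self, wt_blockSwap]
    · rw [Function.update_of_ne hl]
  · rfl

lemma weightOneBlocks_swapFirstWeightOne (y : Vec ν) :
    weightOneBlocks (swapFirstWeightOne y) = weightOneBlocks y := by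
  simp only [weightOneBlocks, wt_swapFirstWeightOne]

lemma nblk_swapFirstWeightOne (y : Vec ν) (w : ℕ) :
    nblk (swapFirstWeightOne y) w = nblk y w := by
  simp only [nblk, wt_swapFirstWeightOne]

lemma swapFirstWeightOne_involutive : Function.Involutive (swapFirstWeightOne (ν := ν)) := by
  intro y
  by_cases h : (weightOneBlocks y).Nonempty
  · have h' : (weightOneBlocks (swapFirstWeightOne y)).Nonempty := by
      rwa [weightOneBlocks_swapFirstWeightOne]
    have hmin : (weightOneBlocks (swapFirstWeightOne y)).min' h' = (weightOneBlocks y).min' h := by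
      simp only [weightOneBlocks_swapFirstWeightOne]
    rw [swapFirstWeightOne_of_nonempty _ h', hmin, swapFirstWeightOne_of_nonempty y h,
      Function.update_self, blockSwap_involutive, Function.update_idem, Function.update_eq_self]
  · simp [swapFirstWeightOne, h]

lemma swapFirstWeightOne_ne_zero {y : Vec ν} (hy : y ≠ 0) : swapFirstWeightOne y ≠ 0 := by
  have hzero : swapFirstWeightOne (0 : Vec ν) = 0 := by
    have : wt (0 : Fin 2 → F2) ≠ 1 := by decide
    simp [swapFirstWeightOne, weightOneBlocks, this]
  intro h
  exact hy (by rw [← swapFirstWeightOne_involutive y, h, hzero])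

lemma sform_swapFirstWeightOne (x y : Vec ν) (hx : ∀ l, wt (x l) = 1) (hy : nblk y 1 ≠ 0) :
    sform x (swapFirstWeightOne y) = sform x y + 1 := by
  have h : (weightOneBlocks y).Nonempty := card_ne_zero.1 hy
  rw [swapFirstWeightOne_of_nonempty y h]
  exact sform_update_blockSwap x y _ (hx _) (mem_filter.1 ((weightOneBlocks y).min'_mem h)).2

end swapFirstWeightOne

theorem nbrs_of_allOnes_general (ν i j k : ℕ)
    (x : Vtx ν) (hx : nblk x.1 1 = ν) :
    (1 ≤ j → 2 * ((OFin ν i j k).filter (fun y => sform x.1 y.1 = 1)).card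
        = (OFin ν i j k).card) ∧
    (j = 0 → Odd i → ((OFin ν i j k).filter (fun y => sform x.1 y.1 = 1)).card
        = (OFin ν i j k).card) ∧
    (j = 0 → Even i → ((OFin ν i j k).filter (fun y => sform x.1 y.1 = 1)).card = 0) := by
  have hx1 : ∀ l, wt (x.1 l) = 1 := by
    simpa using card_filter_eq_iff.1 (hx.trans (card_fin ν).symm)
  have hO : ∀ y ∈ OFin ν i j k, nblk y.1 2 = i ∧ nblk y.1 1 = j := fun y hy =>
    ⟨(mem_filter.1 hy).2.1, (mem_filter.1 hy).2.2.1⟩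
  refine ⟨fun hj => ?_, fun hj hi => ?_, fun hj hi => ?_⟩
  · refine two_mul_card_filter_of_involutive _ (fun y : Vtx ν => sform x.1 y.1 = 1)
      (fun y => ⟨swapFirstWeightOne y.1, swapFirstWeightOne_ne_zero y.2⟩)
      (fun y => Subtype.ext (swapFirstWeightOne_involutive y.1)) (fun y hy => ?_) (fun y hy => ?_)
    · simpa [OFin, nblk_swapFirstWeightOne] using hy
    · have hy1 : nblk y.1 1 ≠ 0 := by have := (hO y hy).2; omega
      rw [sform_swapFirstWeightOne x.1 y.1 hx1 hy1]
      generalize sform x.1 y.1 = a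
      revert a; decide
  · rw [filter_true_of_mem fun y hy => ?_]
    rw [sform_eq_nblk_two x.1 y.1 hx1 ((hO y hy).2.trans hj), (hO y hy).1]
    exact ZMod.natCast_eq_one_iff_odd.2 hi
  · refine card_eq_zero.2 (filter_false_of_mem fun y hy => ?_)
    rw [sform_eq_nblk_two x.1 y.1 hx1 ((hO y hy).2.trans hj), (hO y hy).1,
      ZMod.natCast_eq_zero_iff_even.2 hi]
    decide

/-- For `x ∈ O(0,ν,0)` and any orbit `O(i,j,k)`, the number of neighbors of `x` in
`O(i,j,k)` is half of `|O(i,j,k)|` if `j ≥ 1`, all of it if `j = 0` and `i` is odd,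
and `0` if `j = 0` and `i` is even. -/
theorem nbrs_of_allOnes (ν i j k : ℕ) (h : i + j + k = ν)
    (x : Vtx ν) (hx : nblk x.1 1 = ν) :
    (1 ≤ j → 2 * ((OFin ν i j k).filter (fun y => sform x.1 y.1 = 1)).card
        = (OFin ν i j k).card) ∧
    (j = 0 → Odd i → ((OFin ν i j k).filter (fun y => sform x.1 y.1 = 1)).card
        = (OFin ν i j k).card) ∧
    (j = 0 → Even i → ((OFin ν i j k).filter (fun y => sform x.1 y.1 = 1)).card = 0) :=
  nbrs_of_allOnes_general ν i j k x hx
end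

section
/- Witt's extension theorem: if U is a subspace of a vector space V over a field equipped with a non-degenerate symplectic (alternating) bilinear form, any injective linear map σ: U → V preserving the form extends to an isometry of V onto itself. -/
/-!
Extend `σ` one vector at a time, by well-founded induction on its domain `U`. Given `x ∉ U` and
`y ∉ σ U` with `B (σ u) y = B u x` for all `u ∈ U`, the map `u + c • x ↦ σ u + c • y` is again an
injective isometry, because `B x x = 0 = B y y`. Such a pair exists by non-degeneracy of `B`:
if `B` is degenerate on `U` with radical vector `u₀ ≠ 0`, take `x` with `B u₀ x ≠ 0` and solve for
`y`, which then cannot lie in `σ U` as it pairs non-trivially with `σ u₀`; otherwise take non-zero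
`x ⊥ U` and `y ⊥ σ U`, which lie outside the non-degenerate subspaces `U` and `σ U`.
-/

open Module

namespace LinearPMap

variable {K E F : Type*} [DivisionRing K] [AddCommGroup E] [Module K E] [AddCommGroup F]
  [Module K F]

theorem exists_supSpanSingleton_apply_eq_add (f : E →ₗ.[K] F) {x : E} (y : F)
    (hx : x ∉ f.domain) (w : (f.supSpanSingleton x y hx).domain) :
    ∃ (u : f.domain) (c : K), (w : E) = u + c • x ∧
      f.supSpanSingleton x y hx w = f u + c • y := by
  obtain ⟨w, hw⟩ := w
  obtain ⟨u, hu, z, hz, rfl⟩ := Submodule.mem_sup.mp hw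
  obtain ⟨c, rfl⟩ := Submodule.mem_span_singleton.mp hz
  exact ⟨⟨u, hu⟩, c, rfl, supSpanSingleton_apply_mk f x y hx u hu c⟩

theorem injective_supSpanSingleton {f : E →ₗ.[K] F} (hf : Function.Injective f) {x : E} {y : F}
    (hx : x ∉ f.domain) (hy : y ∉ LinearMap.range f.toFun) :
    Function.Injective (f.supSpanSingleton x y hx) := by
  refine (injective_iff_map_eq_zero (f.supSpanSingleton x y hx).toFun).mpr fun w hw => ?_
  obtain ⟨u, c, hwu, hfw⟩ := f.exists_supSpanSingleton_apply_eq_add y hx w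
  rw [toFun_eq_coe, hfw] at hw
  have hc : c = 0 := by
    by_contra hc
    refine hy ⟨-c⁻¹ • u, ?_⟩
    rw [LinearMap.map_smul, toFun_eq_coe, eq_neg_of_add_eq_zero_left hw, smul_neg, neg_smul,
      neg_neg, inv_smul_smul₀ hc]
  subst hc
  have hu : u = 0 := hf (by simpa using hw)
  ext
  simp [hwu, hu]

end LinearPMap

namespace LinearMap.BilinForm

variable {k V : Type*} [Field k] [AddCommGroup V] [Module k V] {B : LinearMap.BilinForm k V}

structure IsPartialIsometry (B : LinearMap.BilinForm k V) (f : V →ₗ.[k] V) : Prop where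
  injective : Function.Injective f
  apply_apply : ∀ u v : f.domain, B (f u) (f v) = B u v

theorem exists_apply_eq_apply_of_injective [FiniteDimensional k V] (hnd : B.Nondegenerate)
    {f : V →ₗ.[k] V} (hf : Function.Injective f) (x : V) :
    ∃ y, ∀ u : f.domain, B (f u) y = B u x := by
  obtain ⟨g, hg⟩ := f.toFun.exists_leftInverse_of_injective (LinearMap.ker_eq_bot.mpr hf)
  refine ⟨(B.flip.toDual hnd.flip).symm (B.flip x ∘ₗ f.domain.subtype ∘ₗ g), fun u => ?_⟩
  change B.flip _ (f u) = _
  rw [apply_toDual_symm_apply]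
  exact congrArg (fun v : f.domain => B v x) (LinearMap.congr_fun hg u)

theorem orthogonal_ne_bot [FiniteDimensional k V] (hnd : B.Nondegenerate)
    {W : Submodule k V} (hW : W ≠ ⊤) : B.orthogonal W ≠ ⊥ := by
  intro h
  have hfinrank := finrank_orthogonal hnd W
  rw [h, finrank_bot] at hfinrank
  have := Submodule.finrank_lt hW
  omega

namespace IsPartialIsometry

variable {f : V →ₗ.[k] V}

theorem exists_of_not_separatingLeft_restrict [FiniteDimensional k V] (hnd : B.Nondegenerate)
    (hf : B.IsPartialIsometry f) (hsep : ¬(B.restrict f.domain).SeparatingLeft) :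
    ∃ x ∉ f.domain, ∃ y ∉ LinearMap.range f.toFun, ∀ u : f.domain, B (f u) y = B u x := by
  obtain ⟨u₀, hrad, hu₀⟩ : ∃ u₀ : f.domain, (∀ u : f.domain, B u₀ u = 0) ∧ u₀ ≠ 0 := by
    by_contra! h
    exact hsep h
  obtain ⟨x, hx⟩ : ∃ x, B u₀ x ≠ 0 := by
    by_contra! h
    exact hu₀ (Subtype.ext (hnd.1 _ h))
  obtain ⟨y, hy⟩ := exists_apply_eq_apply_of_injective hnd hf.injective x
  refine ⟨x, fun hxU => hx (hrad ⟨x, hxU⟩), y, ?_, hy⟩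
  rintro ⟨u, rfl⟩
  exact hx (by rw [← hy, LinearPMap.toFun_eq_coe, hf.apply_apply, hrad])

theorem exists_of_separatingLeft_restrict [FiniteDimensional k V] (hB : B.IsRefl)
    (hnd : B.Nondegenerate) (hf : B.IsPartialIsometry f) (hdom : f.domain ≠ ⊤)
    (hsep : (B.restrict f.domain).SeparatingLeft) :
    ∃ x ∉ f.domain, ∃ y ∉ LinearMap.range f.toFun, ∀ u : f.domain, B (f u) y = B u x := by
  have hrange : LinearMap.range f.toFun ≠ ⊤ := fun h => (Submodule.finrank_lt hdom).ne <| by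
    rw [← LinearMap.finrank_range_of_inj hf.injective, h, finrank_top]
  obtain ⟨x, hx, hx₀⟩ := Submodule.exists_mem_ne_zero_of_ne_bot (orthogonal_ne_bot hnd hdom)
  obtain ⟨y, hy, hy₀⟩ := Submodule.exists_mem_ne_zero_of_ne_bot (orthogonal_ne_bot hnd hrange)
  refine ⟨x, fun hxU => hx₀ ?_, y, ?_, fun u => (hy _ ⟨u, rfl⟩).trans (hx _ u.2).symm⟩
  · exact congrArg Subtype.val (hsep ⟨x, hxU⟩ fun u => hB _ _ (hx u u.2))
  · rintro ⟨u₁, rfl⟩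
    have : u₁ = 0 := hsep u₁ fun u => hB _ _ <| (hf.apply_apply u u₁).symm.trans (hy _ ⟨u, rfl⟩)
    exact hy₀ (by simp [this])

theorem exists_notMem_domain_notMem_range [FiniteDimensional k V] (hB : B.IsRefl)
    (hnd : B.Nondegenerate) (hf : B.IsPartialIsometry f) (hdom : f.domain ≠ ⊤) :
    ∃ x ∉ f.domain, ∃ y ∉ LinearMap.range f.toFun, ∀ u : f.domain, B (f u) y = B u x := by
  by_cases hsep : (B.restrict f.domain).SeparatingLeft
  · exact hf.exists_of_separatingLeft_restrict hB hnd hdom hsep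
  · exact hf.exists_of_not_separatingLeft_restrict hnd hsep

theorem supSpanSingleton (hB : B.IsAlt) (hf : B.IsPartialIsometry f) {x y : V}
    (hx : x ∉ f.domain) (hy : y ∉ LinearMap.range f.toFun)
    (hxy : ∀ u : f.domain, B (f u) y = B u x) :
    B.IsPartialIsometry (f.supSpanSingleton x y hx) where
  injective := LinearPMap.injective_supSpanSingleton hf.injective hx hy
  apply_apply w₁ w₂ := by
    obtain ⟨u₁, c₁, hw₁, hfw₁⟩ := f.exists_supSpanSingleton_apply_eq_add y hx w₁
    obtain ⟨u₂, c₂, hw₂, hfw₂⟩ := f.exists_supSpanSingleton_apply_eq_add y hx w₂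
    have hyx : B y (f u₂) = B x u₂ := by rw [← hB.neg_eq (f u₂) y, hxy, hB.neg_eq]
    simp only [hfw₁, hfw₂, hw₁, hw₂, map_add, map_smul, LinearMap.add_apply,
      LinearMap.smul_apply, smul_eq_mul, hf.apply_apply, hxy, hyx, hB.self_eq_zero]

theorem exists_gt [FiniteDimensional k V] (hB : B.IsAlt) (hnd : B.Nondegenerate)
    (hf : B.IsPartialIsometry f) (hdom : f.domain ≠ ⊤) :
    ∃ g, f < g ∧ B.IsPartialIsometry g := by
  obtain ⟨x, hx, y, hy, hxy⟩ := hf.exists_notMem_domain_notMem_range hB.isRefl hnd hdom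
  refine ⟨f.supSpanSingleton x y hx, lt_of_le_of_ne (LinearPMap.left_le_sup _ _ _) ?_,
    hf.supSpanSingleton hB hx hy hxy⟩
  exact fun hfg => hx (hfg ▸ Submodule.mem_sup_right (Submodule.mem_span_singleton_self x))

theorem exists_le_domain_eq_top [FiniteDimensional k V] (hB : B.IsAlt) (hnd : B.Nondegenerate)
    (hf : B.IsPartialIsometry f) : ∃ g, g.domain = ⊤ ∧ f ≤ g ∧ B.IsPartialIsometry g := by
  refine WellFoundedGT.induction_top ⟨_, f, rfl, le_rfl, hf⟩ ?_
  rintro _ hN ⟨g, rfl, hfg, hg⟩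
  obtain ⟨g', hlt, hg'⟩ := hg.exists_gt hB hnd hN
  exact ⟨g'.domain, LinearPMap.domain_mono hlt, g', rfl, hfg.trans hlt.le, hg'⟩

theorem exists_linearEquiv_of_domain_eq_top [FiniteDimensional k V]
    (hf : B.IsPartialIsometry f) (htop : f.domain = ⊤) :
    ∃ τ : V ≃ₗ[k] V, (∀ u : f.domain, τ u = f u) ∧ ∀ x y, B (τ x) (τ y) = B x y := by
  let e := LinearEquiv.ofTop f.domain htop
  have hinj : Function.Injective (f.toFun ∘ₗ e.symm.toLinearMap) :=
    hf.injective.comp e.symm.injective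
  refine ⟨LinearEquiv.ofInjectiveEndo _ hinj, fun u => ?_, fun x y => ?_⟩
  · exact congrArg f (e.symm_apply_apply u)
  · simp [e, hf.apply_apply]

end IsPartialIsometry

end LinearMap.BilinForm

/-- Witt's extension theorem for symplectic spaces: if `B` is a non-degenerate
alternating bilinear form on a finite-dimensional vector space `V` over a field `k`,
then any injective linear map `σ` from a subspace `U` of `V` into `V` preserving the
form extends to an isometry of `V` onto itself. -/
theorem witt_extension (k : Type*) [Field k] (V : Type*) [AddCommGroup V] [Module k V]
    [FiniteDimensional k V] (B : LinearMap.BilinForm k V)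
    (halt : ∀ x, B x x = 0) (hnd : B.Nondegenerate)
    (U : Submodule k V) (σ : U →ₗ[k] V) (hinj : Function.Injective σ)
    (hiso : ∀ u v : U, B (σ u) (σ v) = B u v) :
    ∃ τ : V ≃ₗ[k] V, (∀ u : U, τ u = σ u) ∧ ∀ x y : V, B (τ x) (τ y) = B x y := by
  have hσ : B.IsPartialIsometry ⟨U, σ⟩ := ⟨hinj, hiso⟩
  obtain ⟨g, htop, hσg, hg⟩ := hσ.exists_le_domain_eq_top halt hnd
  obtain ⟨τ, hτ, hτB⟩ := hg.exists_linearEquiv_of_domain_eq_top htop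
  exact ⟨τ, fun u => (hτ ⟨u, hσg.1 u.2⟩).trans (hσg.2 rfl).symm, hτB⟩
end

section
/- The subgroup Aut(X)_S of automorphisms of X = Sp(2ν,2) fixing S setwise induces the full symmetric group Sym(S) on S. -/
open Finset

/-- `x` belongs to the 4-subset `S = {v_1,v_2,v_3,v_4}`. -/
def inS {ν : ℕ} (v : Fin 4 → Vec ν) (x : Vec ν) : Prop := ∃ i, x = v i

/-- `x` belongs to `T = {v_1+v_2, v_2+v_3, v_3+v_1}`. -/
def inT {ν : ℕ} (v : Fin 4 → Vec ν) (x : Vec ν) : Prop :=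
  ∃ i j : Fin 4, i ≠ 3 ∧ j ≠ 3 ∧ i ≠ j ∧ x = v i + v j

/-- The number of indices `j ∈ [4]` with `x^T K v_j = 1`. -/
def cnt {ν : ℕ} (v : Fin 4 → Vec ν) (x : Vec ν) : ℕ :=
  (univ.filter (fun j : Fin 4 => sform x (v j) = 1)).card

instance {ν : ℕ} (v : Fin 4 → Vec ν) : DecidablePred (inS v) := fun _ =>
  inferInstanceAs (Decidable (∃ _, _))

instance {ν : ℕ} (v : Fin 4 → Vec ν) : DecidablePred (inT v) := fun _ =>
  inferInstanceAs (Decidable (∃ _, _))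

/-- The set `S` as a finset of vertices. -/
def Sfin {ν : ℕ} (v : Fin 4 → Vec ν) : Finset (Vtx ν) := univ.filter (fun x => inS v x.1)

/-- The set `T` as a finset of vertices. -/
def Tfin {ν : ℕ} (v : Fin 4 → Vec ν) : Finset (Vtx ν) := univ.filter (fun x => inT v x.1)

/-- The set `S_i` of vertices `x` with `#{j : x^T K v_j = 1} = i`, as a finset. -/
def Sifin {ν : ℕ} (v : Fin 4 → Vec ν) (i : ℕ) : Finset (Vtx ν) :=
  univ.filter (fun x => cnt v x.1 = i)

/-- The set `S_0 \ (S ∪ T)` as a finset of vertices. -/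
def S0'fin {ν : ℕ} (v : Fin 4 → Vec ν) : Finset (Vtx ν) :=
  univ.filter (fun x => cnt v x.1 = 0 ∧ ¬ inS v x.1 ∧ ¬ inT v x.1)

/-- The number of neighbors of the vertex `x` inside the finset `C`. -/
def nbc {ν : ℕ} (x : Vtx ν) (C : Finset (Vtx ν)) : ℕ :=
  (C.filter (fun y => sform x.1 y.1 = 1)).card

/-- The standing hypotheses on the special 4-subset `S = {v_1,v_2,v_3,v_4}`:
all `v_i` are vertices, `v_1,v_2,v_3` are linearly independent and pairwise
(and self) `K`-orthogonal, and `v_4 = v_1 + v_2 + v_3`. -/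
structure SConfig (ν : ℕ) (v : Fin 4 → Vec ν) : Prop where
  hne : ∀ i, v i ≠ 0
  hind : LinearIndependent F2 ![v 0, v 1, v 2]
  horth : ∀ i j : Fin 4, i ≠ 3 → j ≠ 3 → sform (v i) (v j) = 0
  hsum : v 3 = v 0 + v 1 + v 2

/-!
It suffices to realize every transposition `(v_i v_j)` by a linear isometry of the symplectic
form `B`, since an isometry maps nonzero vectors to nonzero vectors and preserves adjacency.
The only linear relation among the `v_k` is `v_1 + v_2 + v_3 + v_4 = 0`, so by nondegeneracy
there is a `w` with `B (v_k) w = 1` exactly for `k ∈ {i, j}` (a set of even size). Put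
`a = v_i + v_j`; then `B a w = 0`, and the Siegel transformation `x ↦ x + B x a • w + B x w • a`
is an isometry. As `S` is totally isotropic it sends `v_k` to `v_k + [k ∈ {i, j}] • (v_i + v_j)`,
i.e. it swaps `v_i` and `v_j` and fixes the other two.
-/

namespace LinearMap.BilinForm

section Nondegenerate

variable {K V ι : Type*} [Field K] [AddCommGroup V] [Module K V] [FiniteDimensional K V]
  {B : LinearMap.BilinForm K V}

theorem exists_apply_eq_of_linearIndependent (hB : B.Nondegenerate) {u : ι → V}
    (hu : LinearIndependent K u) (c : ι → K) : ∃ w, ∀ i, B w (u i) = c i := by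
  obtain ⟨φ, hφ⟩ := LinearMap.exists_extend ((Module.Basis.span hu).constr K c)
  refine ⟨(B.toDual hB).symm φ, fun i => ?_⟩
  rw [apply_toDual_symm_apply]
  have hui : u i = Submodule.subtype _ (Module.Basis.span hu i) := by
    simp [Module.Basis.span_apply]
  rw [hui, ← LinearMap.comp_apply, hφ, Module.Basis.constr_basis]

end Nondegenerate

variable {R M : Type*} [CommRing R] [AddCommGroup M] [Module R M]

theorem exists_isometryEquiv_of_forall_swap {ι : Type*} [Finite ι] [DecidableEq ι]
    {B : LinearMap.BilinForm R M} {v : ι → M}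
    (hswap : ∀ i j, i ≠ j → ∃ e : B.IsometryEquiv B, ∀ k, e (v k) = v (Equiv.swap i j k))
    (π : Equiv.Perm ι) : ∃ e : B.IsometryEquiv B, ∀ k, e (v k) = v (π k) := by
  induction π using Equiv.Perm.swap_induction_on with
  | one => exact ⟨.refl B, fun _ => rfl⟩
  | swap_mul π i j hij ih =>
    obtain ⟨e, he⟩ := ih
    obtain ⟨s, hs⟩ := hswap i j hij
    exact ⟨e.trans s, fun k => (congrArg s (he k)).trans (hs (π k))⟩

def siegel (B : LinearMap.BilinForm R M) (a b : M) : M →ₗ[R] M :=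
  LinearMap.id + (B.flip a).smulRight b + (B.flip b).smulRight a

theorem siegel_apply (B : LinearMap.BilinForm R M) (a b x : M) :
    B.siegel a b x = x + B x a • b + B x b • a := rfl

variable {B : LinearMap.BilinForm R M} {a b : M}

namespace IsAlt

theorem apply_siegel_left (hB : B.IsAlt) (hab : B a b = 0) (x : M) :
    B (B.siegel a b x) a = B x a := by
  simp [siegel_apply, hB.self_eq_zero, hB.eq_iff.mp hab]

theorem apply_siegel_right (hB : B.IsAlt) (hab : B a b = 0) (x : M) :
    B (B.siegel a b x) b = B x b := by
  simp [siegel_apply, hB.self_eq_zero, hab]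

theorem siegel_neg_siegel (hB : B.IsAlt) (hab : B a b = 0) (x : M) :
    B.siegel (-a) b (B.siegel a b x) = x := by
  rw [siegel_apply B (-a), map_neg, hB.apply_siegel_left hab, hB.apply_siegel_right hab,
    siegel_apply]
  module

theorem apply_siegel_siegel (hB : B.IsAlt) (hab : B a b = 0) (x y : M) :
    B (B.siegel a b x) (B.siegel a b y) = B x y := by
  have hba : B b a = 0 := hB.eq_iff.mp hab
  simp only [siegel_apply, map_add, map_smul, LinearMap.add_apply, LinearMap.smul_apply,
    smul_eq_mul, hB.self_eq_zero, hab, hba, ← LinearMap.IsAlt.neg hB y a,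
    ← LinearMap.IsAlt.neg hB y b]
  ring

def siegelIsometryEquiv (hB : B.IsAlt) (hab : B a b = 0) : B.IsometryEquiv B where
  toLinearEquiv := .ofLinearMap (f := B.siegel a b) (g := B.siegel (-a) b)
    (LinearMap.ext fun x => by
      simpa using hB.siegel_neg_siegel (a := -a) (by simpa using hab) x)
    (LinearMap.ext fun x => hB.siegel_neg_siegel hab x)
  map_app' := hB.apply_siegel_siegel hab

theorem exists_isometryEquiv_swap [CharP R 2] (hB : B.IsAlt) {ι : Type*} [DecidableEq ι]
    {v : ι → M} (hv : ∀ i j, B (v i) (v j) = 0) {i j : ι} {w : M}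
    (hw : ∀ k, B (v k) w = if k = i ∨ k = j then 1 else 0) :
    ∃ e : B.IsometryEquiv B, ∀ k, e (v k) = v (Equiv.swap i j k) := by
  have hab : B (v i + v j) w = 0 := by
    simp [hw, CharTwo.add_self_eq_zero]
  have hM : ∀ x : M, x + x = 0 := fun x => by
    rw [← two_smul R x, CharTwo.two_eq_zero, zero_smul]
  refine ⟨hB.siegelIsometryEquiv hab, fun k => ?_⟩
  change B.siegel _ _ _ = _
  rw [siegel_apply, map_add, hv, hv, add_zero, zero_smul, add_zero, hw]
  rcases eq_or_ne k i with rfl | hki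
  · simp [← add_assoc, hM]
  rcases eq_or_ne k j with rfl | hkj
  · simp [add_left_comm, hM]
  · simp [hki, hkj, Equiv.swap_apply_of_ne_of_ne]

end IsAlt

end LinearMap.BilinForm

section Symplectic

variable {ν : ℕ}

def sformB (ν : ℕ) : LinearMap.BilinForm F2 (Vec ν) :=
  LinearMap.mk₂ F2 sform
    (fun x y z => by
      simp only [sform, ← sum_add_distrib]
      exact sum_congr rfl fun _ _ => by simp only [Pi.add_apply]; ring)
    (fun c x y => by
      simp only [sform, smul_eq_mul, mul_sum]
      exact sum_congr rfl fun _ _ => by simp only [Pi.smul_apply, smul_eq_mul]; ring)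
    (fun x y z => by
      simp only [sform, ← sum_add_distrib]
      exact sum_congr rfl fun _ _ => by simp only [Pi.add_apply]; ring)
    (fun c x y => by
      simp only [sform, smul_eq_mul, mul_sum]
      exact sum_congr rfl fun _ _ => by simp only [Pi.smul_apply, smul_eq_mul]; ring)

@[simp]
theorem sformB_apply (x y : Vec ν) : sformB ν x y = sform x y := rfl

theorem sform_comm (x y : Vec ν) : sform x y = sform y x :=
  sum_congr rfl fun _ _ => by ring

theorem sformB_isAlt : (sformB ν).IsAlt := fun x =>
  show sform x x = 0 from
    sum_eq_zero fun _ _ => by rw [mul_comm]; exact CharTwo.add_self_eq_zero _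

theorem sform_single_one (x : Vec ν) (l : Fin ν) :
    sform x (Pi.single l (Pi.single 1 1)) = x l 0 := by
  rw [sform, sum_eq_single l (fun m _ hm => by simp [hm]) (by simp)]
  simp

theorem sform_single_zero (x : Vec ν) (l : Fin ν) :
    sform x (Pi.single l (Pi.single 0 1)) = x l 1 := by
  rw [sform, sum_eq_single l (fun m _ hm => by simp [hm]) (by simp)]
  simp

theorem sformB_nondegenerate : (sformB ν).Nondegenerate := by
  refine sformB_isAlt.isRefl.nondegenerate_iff_separatingLeft.mpr fun x hx => ?_
  funext l c
  fin_cases c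
  · simpa [sform_single_one] using hx (Pi.single l (Pi.single 1 1))
  · simpa [sform_single_zero] using hx (Pi.single l (Pi.single 0 1))

def vtxPerm (e : (sformB ν).IsometryEquiv (sformB ν)) : Equiv.Perm (Vtx ν) :=
  (e : Vec ν ≃ Vec ν).subtypeEquiv fun _ => (map_ne_zero_iff e (EquivLike.injective e)).symm

theorem isAut_vtxPerm (e : (sformB ν).IsometryEquiv (sformB ν)) : IsAut (vtxPerm e) :=
  fun x y => by
    change sformB ν (e x) (e y) = 1 ↔ sformB ν x y = 1
    rw [e.map_app]

end Symplectic

namespace SConfig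

variable {ν : ℕ} {v : Fin 4 → Vec ν}

theorem sform_eq_zero (hv : SConfig ν v) (i j : Fin 4) : sform (v i) (v j) = 0 := by
  have h : ∀ i j : Fin 4, i ≠ 3 → j ≠ 3 → sformB ν (v i) (v j) = 0 := hv.horth
  show sformB ν (v i) (v j) = 0
  fin_cases i <;> fin_cases j <;>
    simp (disch := decide) only [Fin.reduceFinMk, hv.hsum, map_add, LinearMap.add_apply, h,
      add_zero]

theorem exists_sform_eq (hv : SConfig ν v) {c : Fin 4 → F2} (hc : ∑ i, c i = 0) :
    ∃ w, ∀ i, sform (v i) w = c i := by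
  obtain ⟨w, hw⟩ :=
    (sformB ν).exists_apply_eq_of_linearIndependent sformB_nondegenerate hv.hind (c ∘ Fin.castSucc)
  have h : ∀ i : Fin 3, sform (v i.castSucc) w = c i.castSucc := fun i => by
    rw [sform_comm]; fin_cases i; exacts [hw 0, hw 1, hw 2]
  refine ⟨w, fun i => ?_⟩
  cases i using Fin.lastCases with
  | cast i => exact h i
  | last =>
    rw [Fin.sum_univ_four] at hc
    calc sformB ν (v 3) w = c 0 + c 1 + c 2 := by
          rw [hv.hsum, map_add, map_add, LinearMap.add_apply, LinearMap.add_apply]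
          exact congr($(h 0) + $(h 1) + $(h 2))
      _ = c 3 := (eq_neg_of_add_eq_zero_left hc).trans (CharTwo.neg_eq _)

theorem exists_isometryEquiv (hv : SConfig ν v) (π : Equiv.Perm (Fin 4)) :
    ∃ e : (sformB ν).IsometryEquiv (sformB ν), ∀ i, e (v i) = v (π i) := by
  refine LinearMap.BilinForm.exists_isometryEquiv_of_forall_swap (fun i j hij => ?_) π
  obtain ⟨w, hw⟩ := hv.exists_sform_eq (c := fun k => if k = i ∨ k = j then 1 else 0) (by
    revert i j; decide)
  exact sformB_isAlt.exists_isometryEquiv_swap hv.sform_eq_zero hw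

end SConfig

theorem autS_acts_as_symS_general (ν : ℕ) (v : Fin 4 → Vec ν) (hv : SConfig ν v)
    (π : Equiv.Perm (Fin 4)) :
    ∃ σ : Equiv.Perm (Vtx ν), IsAut σ ∧ ⇑σ '' {x : Vtx ν | inS v x.1} = {x | inS v x.1} ∧
      ∀ i, σ ⟨v i, hv.hne i⟩ = ⟨v (π i), hv.hne (π i)⟩ := by
  obtain ⟨e, he⟩ := hv.exists_isometryEquiv π
  have hσ : ∀ i, vtxPerm e ⟨v i, hv.hne i⟩ = ⟨v (π i), hv.hne (π i)⟩ := fun i =>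
    Subtype.ext (he i)
  have hS : {x : Vtx ν | inS v x.1} = Set.range fun i => (⟨v i, hv.hne i⟩ : Vtx ν) := by
    ext x; simp [inS, Subtype.ext_iff, eq_comm]
  refine ⟨vtxPerm e, isAut_vtxPerm e, ?_, hσ⟩
  rw [hS, ← Set.range_comp]
  simp only [Function.comp_def, hσ]
  exact π.surjective.range_comp fun i => (⟨v i, hv.hne i⟩ : Vtx ν)

/-- The setwise stabilizer `Aut(X)_S` of `S` in `Aut(Sp(2ν,2))` induces the full
symmetric group on `S`: every permutation of `{v_1,v_2,v_3,v_4}` is realized by an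
automorphism fixing `S` setwise. -/
theorem autS_acts_as_symS (ν : ℕ) (hν : 3 ≤ ν) (v : Fin 4 → Vec ν) (hv : SConfig ν v)
    (π : Equiv.Perm (Fin 4)) :
    ∃ σ : Equiv.Perm (Vtx ν), IsAut σ ∧ ⇑σ '' {x : Vtx ν | inS v x.1} = {x | inS v x.1} ∧
      ∀ i, σ ⟨v i, hv.hne i⟩ = ⟨v (π i), hv.hne (π i)⟩ :=
  autS_acts_as_symS_general ν v hv π
end
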